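/- arXiv:1112.0864 — 4 statements merged into one kernel-verified Lean document; each statement's English description precedes it below -/
import Mathlib

section
/- In the Lie algebra t_{g,n}, for distinct indices i, j, k: [t_{ij}, t_{ik} + t_{jk}] = 0. -/
open scoped BigOperators

noncomputable section

/-- The symplectic vector space of dimension `2g`: pairs `(p, q)` of coordinate vectors. -/
abbrev SpV (g : ℕ) := (Fin g → ℂ) × (Fin g → ℂ)

/-- The standard symplectic form on `SpV g`, with `⟨x_a, y_b⟩ = δ_{ab}`. -/
def sympl (g : ℕ) (v w : SpV g) : ℂ := ∑ a : Fin g, (v.1 a * w.2 a - v.2 a * w.1 a)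

/-- The basis vector `x_a` of the symplectic vector space. -/
def bX (g : ℕ) (a : Fin g) : SpV g := (Pi.single a 1, 0)

/-- The basis vector `y_a` of the symplectic vector space. -/
def bY (g : ℕ) (a : Fin g) : SpV g := (0, Pi.single a 1)

/-- A realization of the generators and defining relations of the Lie algebra `t_{g,n}`
in a complex Lie algebra `L`: linear maps `v ↦ v^i` and elements `t_{ij}` satisfying
`[v^i, w^j] = ⟨v,w⟩ t_{ij}` for `i ≠ j`, `∑_a [x_a^i, y_a^i] = - ∑_{j ≠ i} t_{ij}`, and
`[v^i, t_{jk}] = 0` for `i, j, k` distinct. -/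
structure TRel (g n : ℕ) (L : Type*) [LieRing L] [LieAlgebra ℂ L] where
  ι : Fin n → SpV g →ₗ[ℂ] L
  t : Fin n → Fin n → L
  rel_pair : ∀ i j : Fin n, i ≠ j → ∀ v w : SpV g, ⁅ι i v, ι j w⁆ = sympl g v w • t i j
  rel_surf : ∀ i : Fin n,
    (∑ a : Fin g, ⁅ι i (bX g a), ι i (bY g a)⁆)
      = - ∑ j ∈ Finset.univ.filter (fun j => j ≠ i), t i j
  rel_cent : ∀ i j k : Fin n, i ≠ j → i ≠ k → j ≠ k → ∀ v : SpV g, ⁅ι i v, t j k⁆ = 0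

/-!
Bracketing the surface relation at `k` with `t_{ij}` kills its left-hand side, since `t_{ij}`
commutes with every `v^k`. On the right, `t_{km} = [x^k, y^m]` also commutes with `t_{ij}` when
`m ∉ {i, j}`, so only `[t_{ij}, t_{ki} + t_{kj}]` survives; symmetry of `t` finishes.
-/

lemma sympl_bX_bY (g : ℕ) (a : Fin g) : sympl g (bX g a) (bY g a) = 1 := by
  simp [sympl, bX, bY, Pi.single_apply]

lemma sympl_bY_bX (g : ℕ) (a : Fin g) : sympl g (bY g a) (bX g a) = -1 := by
  simp [sympl, bX, bY, Pi.single_apply]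

namespace TRel

variable {g n : ℕ} {L : Type*} [LieRing L] [LieAlgebra ℂ L] (D : TRel g n L)

lemma lie_t_ι {i j k : Fin n} (hij : i ≠ j) (hki : k ≠ i) (hkj : k ≠ j) (v : SpV g) :
    ⁅D.t i j, D.ι k v⁆ = 0 := by
  rw [← lie_skew, D.rel_cent k i j hki hkj hij, neg_zero]

lemma lie_t_lie_ι_ι {i j k m : Fin n} (hij : i ≠ j) (hki : k ≠ i) (hkj : k ≠ j)
    (hmi : m ≠ i) (hmj : m ≠ j) (v w : SpV g) : ⁅D.t i j, ⁅D.ι k v, D.ι m w⁆⁆ = 0 := by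
  rw [leibniz_lie, D.lie_t_ι hij hki hkj, D.lie_t_ι hij hmi hmj, zero_lie, lie_zero, add_zero]

lemma t_eq_lie_ι_bX_bY {i j : Fin n} (hij : i ≠ j) (a : Fin g) :
    D.t i j = ⁅D.ι i (bX g a), D.ι j (bY g a)⁆ := by
  rw [D.rel_pair i j hij, sympl_bX_bY, one_smul]

lemma t_comm (hg : 1 ≤ g) {i j : Fin n} (hij : i ≠ j) : D.t i j = D.t j i := by
  rw [D.t_eq_lie_ι_bX_bY hij ⟨0, hg⟩, ← lie_skew, D.rel_pair j i hij.symm, sympl_bY_bX, neg_one_smul,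
    neg_neg]

lemma lie_t_t_of_ne (hg : 1 ≤ g) {i j k m : Fin n} (hij : i ≠ j) (hki : k ≠ i) (hkj : k ≠ j)
    (hmi : m ≠ i) (hmj : m ≠ j) (hkm : k ≠ m) : ⁅D.t i j, D.t k m⁆ = 0 := by
  rw [D.t_eq_lie_ι_bX_bY hkm ⟨0, hg⟩]
  exact D.lie_t_lie_ι_ι hij hki hkj hmi hmj _ _

lemma lie_t_sum_t {i j k : Fin n} (hij : i ≠ j) (hki : k ≠ i) (hkj : k ≠ j) :
    ∑ m ∈ Finset.univ.filter (fun m => m ≠ k), ⁅D.t i j, D.t k m⁆ = 0 := by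
  have hsurf : ⁅D.t i j, ∑ a : Fin g, ⁅D.ι k (bX g a), D.ι k (bY g a)⁆⁆ = 0 := by
    rw [lie_sum]
    exact Finset.sum_eq_zero fun a _ => D.lie_t_lie_ι_ι hij hki hkj hki hkj _ _
  rwa [D.rel_surf k, lie_neg, lie_sum, neg_eq_zero] at hsurf

end TRel

/-- In the Lie algebra `t_{g,n}` (with `g ≥ 1`), for distinct indices
`i, j, k` one has `[t_{ij}, t_{ik} + t_{jk}] = 0`. -/
theorem tRel_tt_comm {g n : ℕ} (hg : 1 ≤ g) {L : Type*} [LieRing L] [LieAlgebra ℂ L]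
    (D : TRel g n L) : ∀ i j k : Fin n, i ≠ j → i ≠ k → j ≠ k →
      ⁅D.t i j, D.t i k + D.t j k⁆ = 0 := by
  intro i j k hij hik hjk
  have hsum := D.lie_t_sum_t hij hik.symm hjk.symm
  rw [Finset.sum_eq_add_of_mem i j (by simpa using hik) (by simpa using hjk) hij
    fun m hm ⟨hmi, hmj⟩ => D.lie_t_t_of_ne hg hij hik.symm hjk.symm hmi hmj
      (Finset.mem_filter.mp hm).2.symm] at hsum
  rwa [lie_add, D.t_comm hg hik, D.t_comm hg hjk]
end
end

section
/- The Lie algebra t_{g,n} decomposes as a semidirect product t_{g,n} ≅ u ⋊ f_g^{⊕n}, where u is the kernel of the surjection t_{g,n} → f_g^{⊕n} killing the y_a^i, and the splitting f_g^{⊕n} → t_{g,n} sends the a-th generator of the i-th copy to x_a^i. -/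
open scoped BigOperators DirectSum

noncomputable section

/-- Generators of the Lie algebra `t_{g,n}`: `x_a^i`, `y_a^i` (`a ∈ [g]`, `i ∈ [n]`) and
`t_{ij}` (`i ≠ j ∈ [n]`). -/
inductive TGen (g n : ℕ) : Type
  | x : Fin g → Fin n → TGen g n
  | y : Fin g → Fin n → TGen g n
  | t : Fin n → Fin n → TGen g n

/-- The free complex Lie algebra on the generators of `t_{g,n}`. -/
abbrev TFree (g n : ℕ) := FreeLieAlgebra ℂ (TGen g n)

/-- The generator `x_a^i`. -/
def gX {g n : ℕ} (a : Fin g) (i : Fin n) : TFree g n := FreeLieAlgebra.of ℂ (TGen.x a i)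

/-- The generator `y_a^i`. -/
def gY {g n : ℕ} (a : Fin g) (i : Fin n) : TFree g n := FreeLieAlgebra.of ℂ (TGen.y a i)

/-- The generator `t_{ij}`. -/
def gT {g n : ℕ} (i j : Fin n) : TFree g n := FreeLieAlgebra.of ℂ (TGen.t i j)

/-- The defining relations of `t_{g,n}`:
`[x_a^i, y_b^j] = δ_{ab} t_{ij}`, `[x_a^i, x_b^j] = [y_a^i, y_b^j] = 0` for `i ≠ j`,
`∑_a [x_a^i, y_a^i] = − ∑_{j ≠ i} t_{ij}`, and `[v^i, t_{jk}] = 0` for `i, j, k`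
distinct, `v ∈ {x_a, y_a}`. -/
def tRels (g n : ℕ) : Set (TFree g n) :=
  {z | ∃ a b : Fin g, ∃ i j : Fin n, i ≠ j ∧
      z = ⁅gX a i, gY b j⁆ - if a = b then gT i j else 0} ∪
  {z | ∃ a b : Fin g, ∃ i j : Fin n, i ≠ j ∧ z = ⁅gX a i, gX b j⁆} ∪
  {z | ∃ a b : Fin g, ∃ i j : Fin n, i ≠ j ∧ z = ⁅gY a i, gY b j⁆} ∪
  {z | ∃ i : Fin n, z = (∑ a : Fin g, ⁅gX a i, gY a i⁆)
      + ∑ j ∈ Finset.univ.filter (fun j => j ≠ i), gT i j} ∪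
  {z | ∃ a : Fin g, ∃ i j k : Fin n, i ≠ j ∧ i ≠ k ∧ j ≠ k ∧
      (z = ⁅gX a i, gT j k⁆ ∨ z = ⁅gY a i, gT j k⁆)}

/-- The Lie ideal of relations. -/
def tIdeal (g n : ℕ) : LieIdeal ℂ (TFree g n) := LieSubmodule.lieSpan ℂ _ (tRels g n)

/-- The Lie algebra `t_{g,n}`, presented by generators and relations. -/
abbrev tLie (g n : ℕ) := TFree g n ⧸ tIdeal g n

/-- The canonical projection `TFree g n → tLie g n`. -/
abbrev tmk {g n : ℕ} : TFree g n → tLie g n := LieSubmodule.Quotient.mk (N := tIdeal g n)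

/-- The direct sum `f_g^{⊕ n}` of `n` copies of the free Lie algebra on `g` generators. -/
abbrev freeDS (g n : ℕ) := ⨁ _ : Fin n, FreeLieAlgebra ℂ (Fin g)

/-- The `a`-th generator of the `i`-th copy of `f_g` inside `f_g^{⊕ n}`. -/
def fgen {g n : ℕ} (i : Fin n) (a : Fin g) : freeDS g n :=
  DirectSum.of (fun _ : Fin n => FreeLieAlgebra ℂ (Fin g)) i (FreeLieAlgebra.of ℂ a)

/-! The projection `π` is induced from the free Lie algebra by sending `x_a^i` to the generator
`(a, i)` and `y_a^i, t_{ij}` to `0`; every relation maps to `0` because the only surviving one,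
`[x_a^i, x_b^j] = 0` for `i ≠ j`, holds in the direct sum. The splitting `σ` sends the `i`-th copy
of `f_g` to the span of the `x_a^i`; distinct copies commute in `t_{g,n}` because their
generators do, and `π ∘ σ = id` is checked on generators. The decomposition of `z` is then
`(z - σ (π z)) + σ (π z)`. -/

namespace LieIdeal

variable {R L L' : Type*} [CommRing R] [LieRing L] [LieAlgebra R L] [LieRing L'] [LieAlgebra R L']

def liftQ (I : LieIdeal R L) (f : L →ₗ⁅R⁆ L') (h : I ≤ f.ker) : L ⧸ I →ₗ⁅R⁆ L' where
  toLinearMap := I.toSubmodule.liftQ f.toLinearMap fun z hz => LieHom.mem_ker.mp (h hz)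
  map_lie' := by
    rintro ⟨x⟩ ⟨y⟩
    exact f.map_lie x y

@[simp]
theorem liftQ_mk (I : LieIdeal R L) (f : L →ₗ⁅R⁆ L') (h : I ≤ f.ker) (z : L) :
    I.liftQ f h (LieSubmodule.Quotient.mk z) = f z :=
  rfl

end LieIdeal

namespace LieSubalgebra

variable (R : Type*) {L : Type*} [CommRing R] [LieRing L] [LieAlgebra R L]

def centralizer (s : L) : LieSubalgebra R L where
  carrier := {z | ⁅z, s⁆ = 0}
  add_mem' {a b} ha hb := by simp_all [add_lie]
  zero_mem' := zero_lie s
  smul_mem' c a ha := by simp_all [smul_lie]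
  lie_mem' {a b} ha hb := by simp_all [lie_lie]

end LieSubalgebra

namespace FreeLieAlgebra

variable {R L X Y : Type*} [CommRing R] [LieRing L] [LieAlgebra R L]

theorem lift_mem {K : LieSubalgebra R L} {f : X → L} (hf : ∀ x, f x ∈ K)
    (u : FreeLieAlgebra R X) : lift R f u ∈ K := by
  have : lift R f = K.incl.comp (lift R fun x => (⟨f x, hf x⟩ : K)) :=
    hom_ext fun x => by simp [lift_of_apply]
  rw [this]
  exact (lift R (fun x => (⟨f x, hf x⟩ : K)) u).2

theorem lie_lift_lift_eq_zero {f : X → L} {g : Y → L} (h : ∀ x y, ⁅f x, g y⁆ = 0)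
    (u : FreeLieAlgebra R X) (v : FreeLieAlgebra R Y) : ⁅lift R f u, lift R g v⁆ = 0 := by
  have hu : ∀ y, ⁅g y, lift R f u⁆ = 0 := fun y => by
    rw [← lie_skew, neg_eq_zero]
    exact lift_mem (K := LieSubalgebra.centralizer R (g y)) (fun x => h x y) u
  rw [← lie_skew, neg_eq_zero]
  exact lift_mem (K := LieSubalgebra.centralizer R (lift R f u)) hu v

end FreeLieAlgebra

namespace DirectSum

variable {R ι : Type*} {L : ι → Type*} {L' : Type*} [CommRing R] [DecidableEq ι]
  [∀ i, LieRing (L i)] [∀ i, LieAlgebra R (L i)] [LieRing L'] [LieAlgebra R L']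

theorem lieHom_ext {F G : (⨁ i, L i) →ₗ⁅R⁆ L'}
    (h : ∀ i, F.comp (lieAlgebraOf R ι L i) = G.comp (lieAlgebraOf R ι L i)) : F = G :=
  LieHom.ext fun x => by
    induction x using DirectSum.induction_on with
    | zero => simp
    | of i v => exact LieHom.congr_fun (h i) v
    | add x y hx hy => rw [map_add, map_add, hx, hy]

theorem toLieAlgebra_of (f : ∀ i, L i →ₗ⁅R⁆ L')
    (hf : Pairwise fun i j => ∀ (x : L i) (y : L j), ⁅f i x, f j y⁆ = 0) (i : ι) (v : L i) :
    toLieAlgebra L' f hf (of L i v) = f i v :=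
  toModule_lof R i v

end DirectSum

namespace LieHom

variable {R L M : Type*} [CommRing R] [LieRing L] [LieAlgebra R L] [LieRing M] [LieAlgebra R M]

theorem existsUnique_add_ker_of_comp_eq_id {π : L →ₗ⁅R⁆ M} {σ : M →ₗ⁅R⁆ L}
    (h : π.comp σ = LieHom.id) (z : L) : ∃! p : π.ker × M, z = ↑p.1 + σ p.2 := by
  have hπσ : ∀ m, π (σ m) = m := LieHom.congr_fun h
  refine ⟨(⟨z - σ (π z), by simp [hπσ]⟩, π z), (sub_add_cancel _ _).symm, ?_⟩
  rintro ⟨⟨u, hu⟩, m⟩ rfl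
  have hm : π (u + σ m) = m := by rw [map_add, hπσ, LieHom.mem_ker.mp hu, zero_add]
  simp [hm]

end LieHom

namespace TLie

variable {g n : ℕ}

def projGen : TGen g n → freeDS g n
  | .x a i => fgen i a
  | .y _ _ => 0
  | .t _ _ => 0

def projFree (g n : ℕ) : TFree g n →ₗ⁅ℂ⁆ freeDS g n := FreeLieAlgebra.lift ℂ projGen

@[simp]
theorem projFree_gX (a : Fin g) (i : Fin n) : projFree g n (gX a i) = fgen i a :=
  FreeLieAlgebra.lift_of_apply ..

@[simp]
theorem projFree_gY (a : Fin g) (i : Fin n) : projFree g n (gY a i) = 0 :=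
  FreeLieAlgebra.lift_of_apply ..

@[simp]
theorem projFree_gT (i j : Fin n) : projFree g n (gT i j) = 0 :=
  FreeLieAlgebra.lift_of_apply ..

theorem fgen_lie_fgen_of_ne {i j : Fin n} (hij : i ≠ j) (a b : Fin g) :
    ⁅fgen i a, fgen j b⁆ = 0 :=
  DirectSum.lie_of_of_ne _ hij _ _

theorem tIdeal_le_ker_projFree : tIdeal g n ≤ (projFree g n).ker := by
  rw [tIdeal, LieSubmodule.lieSpan_le]
  rintro z ((((⟨a, b, i, j, -, rfl⟩ | ⟨a, b, i, j, hij, rfl⟩) | ⟨a, b, i, j, -, rfl⟩) | ⟨i, rfl⟩) |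
      ⟨a, i, j, k, -, -, -, rfl | rfl⟩) <;>
    simp [LieHom.mem_ker, apply_ite, fgen_lie_fgen_of_ne, *]

def proj (g n : ℕ) : tLie g n →ₗ⁅ℂ⁆ freeDS g n :=
  (tIdeal g n).liftQ (projFree g n) tIdeal_le_ker_projFree

theorem tmk_eq_zero_of_mem_tRels {z : TFree g n} (h : z ∈ tRels g n) : tmk z = 0 :=
  LieSubmodule.Quotient.mk_eq_zero'.mpr (LieSubmodule.subset_lieSpan h)

theorem lie_tmk_gX_of_ne {i j : Fin n} (hij : i ≠ j) (a b : Fin g) :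
    ⁅tmk (gX a i), tmk (gX b j)⁆ = 0 := by
  rw [← LieSubmodule.Quotient.mk_bracket]
  exact tmk_eq_zero_of_mem_tRels (Or.inl (Or.inl (Or.inl (Or.inr ⟨a, b, i, j, hij, rfl⟩))))

def splitCopy (g n : ℕ) (i : Fin n) : FreeLieAlgebra ℂ (Fin g) →ₗ⁅ℂ⁆ tLie g n :=
  FreeLieAlgebra.lift ℂ fun a => tmk (gX a i)

theorem splitCopy_lie_splitCopy_of_ne {i j : Fin n} (hij : i ≠ j)
    (u v : FreeLieAlgebra ℂ (Fin g)) : ⁅splitCopy g n i u, splitCopy g n j v⁆ = 0 :=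
  FreeLieAlgebra.lie_lift_lift_eq_zero (lie_tmk_gX_of_ne hij) u v

def split (g n : ℕ) : freeDS g n →ₗ⁅ℂ⁆ tLie g n :=
  DirectSum.toLieAlgebra (tLie g n) (splitCopy g n) fun _ _ => splitCopy_lie_splitCopy_of_ne

theorem split_fgen (i : Fin n) (a : Fin g) : split g n (fgen i a) = tmk (gX a i) :=
  (DirectSum.toLieAlgebra_of _ _ i _).trans (FreeLieAlgebra.lift_of_apply ..)

theorem proj_comp_split : (proj g n).comp (split g n) = LieHom.id :=
  DirectSum.lieHom_ext fun i => FreeLieAlgebra.hom_ext fun a => by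
    show proj g n (split g n (fgen i a)) = fgen i a
    simp [split_fgen, proj]

end TLie

/-- The Lie algebra `t_{g,n}` decomposes as a semidirect product
`t_{g,n} ≅ u ⋊ f_g^{⊕n}`: there is a surjection `π : t_{g,n} → f_g^{⊕n}` killing the
`y_a^i` and the `t_{ij}` and sending `x_a^i` to the `a`-th generator of the `i`-th copy,
a splitting `σ : f_g^{⊕n} → t_{g,n}` sending that generator to `x_a^i` with `π ∘ σ = id`,
and every element of `t_{g,n}` is uniquely the sum of an element of `u = ker π` and an
element of `σ(f_g^{⊕n})`. -/
theorem tLie_semidirect (g n : ℕ) :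
    ∃ (π : tLie g n →ₗ⁅ℂ⁆ freeDS g n) (σ : freeDS g n →ₗ⁅ℂ⁆ tLie g n),
      (∀ (a : Fin g) (i : Fin n), π (tmk (gX a i)) = fgen i a) ∧
      (∀ (a : Fin g) (i : Fin n), π (tmk (gY a i)) = 0) ∧
      (∀ i j : Fin n, i ≠ j → π (tmk (gT i j)) = 0) ∧
      (∀ (i : Fin n) (a : Fin g), σ (fgen i a) = tmk (gX a i)) ∧
      Function.Surjective π ∧
      π.comp σ = LieHom.id ∧
      (∀ z : tLie g n, ∃! p : π.ker × freeDS g n, z = ↑p.1 + σ p.2) := by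
  have hπσ := TLie.proj_comp_split (g := g) (n := n)
  refine ⟨TLie.proj g n, TLie.split g n, fun a i => by simp [TLie.proj],
    fun a i => by simp [TLie.proj], fun i j _ => by simp [TLie.proj], TLie.split_fgen,
    Function.LeftInverse.surjective (LieHom.congr_fun hπσ), hπσ,
    LieHom.existsUnique_add_ker_of_comp_eq_id hπσ⟩
end
end

section
/- π_g admits the alternative presentation ⟨Ã_a, B̃_a, a ∈ [g] | Ã_1⋯Ã_g = (B̃_1Ã_1B̃_1^{-1})⋯(B̃_gÃ_gB̃_g^{-1})⟩, via the isomorphism defined by Ã_a = P_a A_a P_a^{-1} and B̃_a = P_a B_a P_a^{-1}, where P_a = Π_{b<a} B_b A_b^{-1} B_b^{-1}. -/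
noncomputable section

/-- The generator `A_a`, as an element of the free group. -/
def genA {g : ℕ} (a : Fin g) : FreeGroup (Fin g ⊕ Fin g) := FreeGroup.of (Sum.inl a)

/-- The generator `B_a`, as an element of the free group. -/
def genB {g : ℕ} (a : Fin g) : FreeGroup (Fin g ⊕ Fin g) := FreeGroup.of (Sum.inr a)

/-- The defining relator `∏_a A_a B_a A_a⁻¹ B_a⁻¹` of the genus-`g` surface group. -/
def surfaceRels (g : ℕ) : Set (FreeGroup (Fin g ⊕ Fin g)) :=
  {((List.finRange g).map fun a => genA a * genB a * (genA a)⁻¹ * (genB a)⁻¹).prod}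

/-- The genus-`g` surface group `π_g`. -/
abbrev SurfaceGroup (g : ℕ) := PresentedGroup (surfaceRels g)

/-- The alternative relator `(Ã_1⋯Ã_g) · ((B̃_1Ã_1B̃_1⁻¹)⋯(B̃_gÃ_gB̃_g⁻¹))⁻¹`. -/
def altRels (g : ℕ) : Set (FreeGroup (Fin g ⊕ Fin g)) :=
  {(((List.finRange g).map fun a => genA a).prod) *
    (((List.finRange g).map fun a => genB a * genA a * (genB a)⁻¹).prod)⁻¹}

/-- The element `A_a` of `π_g`. -/
def Ag {g : ℕ} (a : Fin g) : SurfaceGroup g := PresentedGroup.of (Sum.inl a)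

/-- The element `B_a` of `π_g`. -/
def Bg {g : ℕ} (a : Fin g) : SurfaceGroup g := PresentedGroup.of (Sum.inr a)

/-- The element `P_a = ∏_{b<a} B_b A_b⁻¹ B_b⁻¹` of `π_g`. -/
def Pg {g : ℕ} (a : Fin g) : SurfaceGroup g :=
  (((List.finRange g).filter fun b => b < a).map fun b => Bg b * (Ag b)⁻¹ * (Bg b)⁻¹).prod

/-! With `x_b = B_b A_b⁻¹ B_b⁻¹` we have `P_{a+1} = P_a x_a`, so conjugation by the prefix products
telescopes: `∏_a P_a y_a P_a⁻¹ = (∏_a y_a x_a) P_g⁻¹`. For `y = A` this turns `∏_a Ã_a` into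
`(∏_a [A_a, B_a]) P_g⁻¹ = P_g⁻¹`, and for `y = x⁻¹ = B A B⁻¹` it turns `∏_a B̃_a Ã_a B̃_a⁻¹` into
`P_g⁻¹` as well. Symmetrically `A_a ↦ R_a Ã_a R_a⁻¹`, `B_a ↦ R_a B̃_a R_a⁻¹`, with
`R_a = ∏_{b<a} B̃_b Ã_b B̃_b⁻¹`, respects the surface relation, and the same telescoping shows
that the two maps send `P_a` to `R_a⁻¹` and `R_a` to `P_a⁻¹`; hence they are mutually inverse. -/

theorem List.take_finRange_succ {g k : ℕ} (hk : k < g) :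
    (List.finRange g).take (k + 1) = (List.finRange g).take k ++ [⟨k, hk⟩] := by
  rw [List.take_add_one, List.getElem?_eq_getElem (by simpa using hk)]
  simp

theorem List.filter_lt_finRange {g : ℕ} (a : Fin g) :
    (List.finRange g).filter (· < a) = (List.finRange g).take a := by
  conv_lhs => rw [← List.take_append_drop a (List.finRange g)]
  rw [List.filter_append, List.filter_eq_self.2, List.filter_eq_nil_iff.2, List.append_nil]
  · intro b hb
    obtain ⟨i, hi, rfl⟩ := List.mem_iff_getElem.1 hb
    simp [Fin.lt_def]
  · intro b hb
    obtain ⟨i, hi, rfl⟩ := List.mem_iff_getElem.1 hb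
    simp only [List.length_take, List.length_finRange, lt_inf_iff] at hi
    simp [Fin.lt_def, hi.1]

section PrefixProd

variable {G : Type*} [Group G] {g : ℕ}

def prefixProd (w : Fin g → G) (n : ℕ) : G :=
  (((List.finRange g).take n).map w).prod

@[simp]
theorem prefixProd_zero (w : Fin g → G) : prefixProd w 0 = 1 := by
  simp [prefixProd]

theorem prefixProd_succ (w : Fin g → G) {n : ℕ} (hn : n < g) :
    prefixProd w (n + 1) = prefixProd w n * w ⟨n, hn⟩ := by
  simp [prefixProd, List.take_finRange_succ hn]

/-- Telescoping: `P_a y_a P_a⁻¹ = P_a (y_a w_a) P_{a+1}⁻¹` since `P_{a+1} = P_a w_a`. -/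
theorem prod_take_conj_prefixProd (w y : Fin g → G) {n : ℕ} (hn : n ≤ g) :
    (((List.finRange g).take n).map fun a : Fin g =>
        prefixProd w a * y a * (prefixProd w a)⁻¹).prod =
      (((List.finRange g).take n).map fun a => y a * w a).prod * (prefixProd w n)⁻¹ := by
  induction n with
  | zero => simp
  | succ n ih =>
    rw [List.take_finRange_succ hn, List.map_append, List.map_append, List.prod_append,
      List.prod_append, ih (by omega), prefixProd_succ w hn]
    simp only [List.map_cons, List.map_nil, List.prod_cons, List.prod_nil]
    group

theorem prod_take_conj_prefixProd_inv (w : Fin g → G) {n : ℕ} (hn : n ≤ g) :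
    (((List.finRange g).take n).map fun a : Fin g =>
        prefixProd w a * (w a)⁻¹ * (prefixProd w a)⁻¹).prod =
      (prefixProd w n)⁻¹ := by
  rw [prod_take_conj_prefixProd w _ hn]
  simp

theorem prod_conj_prefixProd (w y : Fin g → G) :
    ((List.finRange g).map fun a : Fin g => prefixProd w a * y a * (prefixProd w a)⁻¹).prod =
      ((List.finRange g).map fun a => y a * w a).prod * (prefixProd w g)⁻¹ := by
  have h := prod_take_conj_prefixProd w y le_rfl
  rwa [List.take_of_length_le (by simp)] at h

theorem map_prefixProd_eq_inv {H : Type*} [Group H] (f : G →* H)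
    {w : Fin g → G} {v : Fin g → H}
    (hwv : ∀ b, f (w b) = prefixProd v b * (v b)⁻¹ * (prefixProd v b)⁻¹) {n : ℕ} (hn : n ≤ g) :
    f (prefixProd w n) = (prefixProd v n)⁻¹ := by
  rw [prefixProd, map_list_prod, List.map_map, Function.comp_def]
  simp_rw [hwv]
  exact prod_take_conj_prefixProd_inv v hn

end PrefixProd

section Presentations

variable {G : Type*} [Group G] {g : ℕ}

def conjGenerators (c α β : Fin g → G) : Fin g ⊕ Fin g → G :=
  Sum.elim (fun a => c a * α a * (c a)⁻¹) (fun a => c a * β a * (c a)⁻¹)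

@[simp]
theorem conjGenerators_inl (c α β : Fin g → G) (a : Fin g) :
    conjGenerators c α β (.inl a) = c a * α a * (c a)⁻¹ := rfl

@[simp]
theorem conjGenerators_inr (c α β : Fin g → G) (a : Fin g) :
    conjGenerators c α β (.inr a) = c a * β a * (c a)⁻¹ := rfl

theorem lift_conjGenerators_altRels (α β : Fin g → G)
    (h : ((List.finRange g).map fun a => α a * β a * (α a)⁻¹ * (β a)⁻¹).prod = 1) :
    ∀ r ∈ altRels g, FreeGroup.lift
      (conjGenerators (fun a => prefixProd (fun b => β b * (α b)⁻¹ * (β b)⁻¹) a) α β) r = 1 := by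
  rintro _ rfl
  simp only [map_mul, map_inv, map_list_prod, List.map_map, Function.comp_def, genA, genB,
    FreeGroup.lift_apply_of, conjGenerators_inl, conjGenerators_inr, conj_inv, conj_mul,
    mul_inv_eq_one]
  rw [prod_conj_prefixProd, prod_conj_prefixProd]
  congr 1
  calc _ = ((List.finRange g).map fun a => α a * β a * (α a)⁻¹ * (β a)⁻¹).prod := by
        simp only [mul_assoc]
    _ = 1 := h
    _ = _ := by simp [mul_assoc]

theorem lift_conjGenerators_surfaceRels (α β : Fin g → G)
    (h : ((List.finRange g).map α).prod =
      ((List.finRange g).map fun a => β a * α a * (β a)⁻¹).prod) :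
    ∀ r ∈ surfaceRels g, FreeGroup.lift
      (conjGenerators (fun a => prefixProd (fun b => β b * α b * (β b)⁻¹) a) α β) r = 1 := by
  rintro _ rfl
  simp only [map_mul, map_inv, map_list_prod, List.map_map, Function.comp_def, genA, genB,
    FreeGroup.lift_apply_of, conjGenerators_inl, conjGenerators_inr, conj_inv, conj_mul]
  rw [prod_conj_prefixProd, mul_inv_eq_one]
  calc _ = ((List.finRange g).map α).prod := by
        congr 2
        funext a
        group
    _ = _ := h
    _ = _ := by rw [prefixProd, List.take_of_length_le (by simp)]

end Presentations

namespace SurfaceGroup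

variable {g : ℕ}

theorem prod_commutator_eq_one :
    ((List.finRange g).map fun a => Ag a * Bg a * (Ag a)⁻¹ * (Bg a)⁻¹).prod = 1 := by
  have h := PresentedGroup.one_of_mem (rels := surfaceRels g) rfl
  rw [map_list_prod, List.map_map] at h
  exact h

theorem Pg_eq_prefixProd (a : Fin g) :
    Pg a = prefixProd (fun b => Bg b * (Ag b)⁻¹ * (Bg b)⁻¹) a := by
  rw [Pg, List.filter_lt_finRange, prefixProd]

def altA (a : Fin g) : PresentedGroup (altRels g) := PresentedGroup.of (.inl a)

def altB (a : Fin g) : PresentedGroup (altRels g) := PresentedGroup.of (.inr a)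

theorem prod_altA_eq :
    ((List.finRange g).map altA).prod =
      ((List.finRange g).map fun a => altB a * altA a * (altB a)⁻¹).prod := by
  have h := PresentedGroup.mk_eq_mk_of_mul_inv_mem (rels := altRels g) rfl
  rw [map_list_prod, map_list_prod, List.map_map, List.map_map] at h
  exact h

def altP (a : Fin g) : PresentedGroup (altRels g) :=
  prefixProd (fun b => altB b * altA b * (altB b)⁻¹) a

def toAlt : SurfaceGroup g →* PresentedGroup (altRels g) :=
  PresentedGroup.toGroup (lift_conjGenerators_surfaceRels altA altB prod_altA_eq)

def ofAlt : PresentedGroup (altRels g) →* SurfaceGroup g :=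
  PresentedGroup.toGroup (lift_conjGenerators_altRels Ag Bg prod_commutator_eq_one)

theorem toAlt_Ag (a : Fin g) : toAlt (Ag a) = altP a * altA a * (altP a)⁻¹ :=
  PresentedGroup.toGroup.of _

theorem toAlt_Bg (a : Fin g) : toAlt (Bg a) = altP a * altB a * (altP a)⁻¹ :=
  PresentedGroup.toGroup.of _

theorem ofAlt_altA (a : Fin g) : ofAlt (altA a) = Pg a * Ag a * (Pg a)⁻¹ := by
  rw [Pg_eq_prefixProd]
  exact PresentedGroup.toGroup.of _

theorem ofAlt_altB (a : Fin g) : ofAlt (altB a) = Pg a * Bg a * (Pg a)⁻¹ := by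
  rw [Pg_eq_prefixProd]
  exact PresentedGroup.toGroup.of _

theorem toAlt_Pg (a : Fin g) : toAlt (Pg a) = (altP a)⁻¹ := by
  rw [Pg_eq_prefixProd]
  refine map_prefixProd_eq_inv toAlt (fun b => ?_) a.isLt.le
  simp only [map_mul, map_inv, toAlt_Ag, toAlt_Bg, conj_inv, conj_mul, altP]

theorem ofAlt_altP (a : Fin g) : ofAlt (altP a) = (Pg a)⁻¹ := by
  rw [Pg_eq_prefixProd]
  refine map_prefixProd_eq_inv ofAlt (fun b => ?_) a.isLt.le
  simp only [map_mul, map_inv, ofAlt_altA, ofAlt_altB, conj_inv, conj_mul, Pg_eq_prefixProd]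
  group

theorem toAlt_comp_ofAlt : toAlt.comp ofAlt = MonoidHom.id (PresentedGroup (altRels g)) := by
  ext (a | a)
  · change toAlt (ofAlt (altA a)) = altA a
    rw [ofAlt_altA, map_mul, map_mul, map_inv, toAlt_Pg, toAlt_Ag]
    group
  · change toAlt (ofAlt (altB a)) = altB a
    rw [ofAlt_altB, map_mul, map_mul, map_inv, toAlt_Pg, toAlt_Bg]
    group

theorem ofAlt_comp_toAlt : ofAlt.comp toAlt = MonoidHom.id (SurfaceGroup g) := by
  ext (a | a)
  · change ofAlt (toAlt (Ag a)) = Ag a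
    rw [toAlt_Ag, map_mul, map_mul, map_inv, ofAlt_altP, ofAlt_altA]
    group
  · change ofAlt (toAlt (Bg a)) = Bg a
    rw [toAlt_Bg, map_mul, map_mul, map_inv, ofAlt_altP, ofAlt_altB]
    group

end SurfaceGroup

/-- `π_g` admits the alternative presentation
`⟨Ã_a, B̃_a | Ã_1⋯Ã_g = (B̃_1Ã_1B̃_1⁻¹)⋯(B̃_gÃ_gB̃_g⁻¹)⟩`, via the isomorphism defined by
`Ã_a ↦ P_a A_a P_a⁻¹` and `B̃_a ↦ P_a B_a P_a⁻¹`, where `P_a = ∏_{b<a} B_b A_b⁻¹ B_b⁻¹`. -/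
theorem surfaceGroup_alt_presentation (g : ℕ) :
    ∃ e : PresentedGroup (altRels g) ≃* SurfaceGroup g,
      ∀ a : Fin g,
        e (PresentedGroup.of (Sum.inl a)) = Pg a * Ag a * (Pg a)⁻¹ ∧
        e (PresentedGroup.of (Sum.inr a)) = Pg a * Bg a * (Pg a)⁻¹ := by
  open SurfaceGroup in
  exact ⟨ofAlt.toMulEquiv toAlt toAlt_comp_ofAlt ofAlt_comp_toAlt,
    fun a => ⟨ofAlt_altA a, ofAlt_altB a⟩⟩
end
end

section
/- Let f_g be the free Lie algebra on x_1,…,x_g, F = U(f_g), and let M, M_{ij}, M_{ijk} be the F^{⊗n}-modules defined below. If M and N are ℕ-graded F^{⊗n}-modules (grading compatible with |x_a^i| = 1) and M or N satisfies property (P), then M ⊗ N satisfies property (P). [Property (P) for a module Z: the map Z^{[g]×[g]} → Z^{[g]³×([n]−{i,j})} ⊕ Z^{[g]} ⊕ Z^{[g]} sending (β_{ab}) to ((x_c^k·β_{ab})_{a,b,c;k≠i,j}, (Σ_c x_c^i·β_{ca})_a, (Σ_c x_c^j·β_{ac})_a) is injective.] -/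
/-! If `M` has (P) and `β` lies in the kernel of the map of (P) for `M ⊗ N`, let `q` be the
lowest degree in which some `(1 ⊗ π_q) β_{ab}` is nonzero, `π_q` being the projection of `N`
onto degree `q`. As the `x_c^k` raise the degree, `(1 ⊗ π_q)(1 ⊗ x_c^k) β_{ab}` only involves
the degree `q - 1` components of `β_{ab}`, which vanish; hence `(1 ⊗ π_q) β` lies in the kernel
for the action `x_c^k ⊗ 1` alone. Expanding in a basis of `N`, each coefficient lies in the
kernel for `M`, so `(1 ⊗ π_q) β = 0`, a contradiction. If `N` has (P), swap the factors. -/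

open scoped TensorProduct

noncomputable section

def PropertyP {g n : ℕ} {Z : Type*} [AddCommGroup Z] [Module ℂ Z]
    (act : Fin g → Fin n → Module.End ℂ Z) (i j : Fin n) : Prop :=
  Function.Injective
    (fun β : Fin g → Fin g → Z =>
      ((fun (a b c : Fin g) (k : {k : Fin n // k ≠ i ∧ k ≠ j}) => act c k.1 (β a b)),
       (fun a : Fin g => ∑ c : Fin g, act c i (β c a)),
       (fun a : Fin g => ∑ c : Fin g, act c j (β a c))))

namespace DirectSum.IsInternal

variable {ι R N : Type*} [Semiring R] [AddCommMonoid N] [Module R N]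

section

variable [DecidableEq ι] {gr : ι → Submodule R N}

theorem linearMap_ext {P : Type*} [AddCommMonoid P] [Module R P] (h : IsInternal gr)
    {f f' : N →ₗ[R] P} (hf : ∀ d, ∀ x ∈ gr d, f x = f' x) : f = f' := by
  let := h.chooseDecomposition
  exact decompose_lhom_ext gr fun d => LinearMap.ext fun x => hf d x x.2

def proj (h : IsInternal gr) (q : ι) : N →ₗ[R] N :=
  (gr q).subtype ∘ₗ component R ι (fun q => gr q) q ∘ₗ
    (LinearEquiv.ofBijective (coeLinearMap gr) h).symm.toLinearMap

theorem proj_apply_of_mem (h : IsInternal gr) {d : ι} {x : N} (hx : x ∈ gr d) (q : ι) :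
    h.proj q x = if q = d then x else 0 := by
  by_cases hqd : q = d
  · subst hqd
    simp [proj, ← apply_eq_component, h.ofBijective_coeLinearMap_of_mem hx]
  · simp [proj, ← apply_eq_component, h.ofBijective_coeLinearMap_of_mem_ne (Ne.symm hqd) hx, hqd]

theorem coord_proj {α : ι → Type*} (h : IsInternal gr) (v : ∀ q, Module.Basis (α q) R (gr q))
    (s : Σ q, α q) (x : N) :
    (h.collectedBasis v).coord s (h.proj s.1 x) = (h.collectedBasis v).coord s x := by
  refine LinearMap.congr_fun (h.linearMap_ext (f := (h.collectedBasis v).coord s ∘ₗ h.proj s.1)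
    (f' := (h.collectedBasis v).coord s) fun d x hx => ?_) x
  by_cases hd : s.1 = d
  · simp [h.proj_apply_of_mem hx, hd]
  · obtain ⟨q, a⟩ := s
    simp [h.proj_apply_of_mem hx, hd, h.collectedBasis_repr_of_mem_ne v (Ne.symm hd) hx]

end

theorem proj_succ_comp {gr : ℕ → Submodule R N} (h : IsInternal gr) {v : N →ₗ[R] N}
    (hv : ∀ d, ∀ x ∈ gr d, v x ∈ gr (d + 1)) (q : ℕ) : h.proj (q + 1) ∘ₗ v = v ∘ₗ h.proj q :=
  h.linearMap_ext fun d x hx => by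
    simp [h.proj_apply_of_mem hx, h.proj_apply_of_mem (hv d x hx), apply_ite v]

theorem proj_zero_comp {gr : ℕ → Submodule R N} (h : IsInternal gr) {v : N →ₗ[R] N}
    (hv : ∀ d, ∀ x ∈ gr d, v x ∈ gr (d + 1)) : h.proj 0 ∘ₗ v = 0 :=
  h.linearMap_ext fun d x hx => by simp [h.proj_apply_of_mem (hv d x hx)]

end DirectSum.IsInternal

namespace TensorProduct

variable {R M M' N : Type*} [CommRing R] [AddCommGroup M] [Module R M] [AddCommGroup M']
  [Module R M'] [AddCommGroup N] [Module R N]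

theorem eq_zero_of_forall_rid_lTensor_coord {ι : Type*} (b : Module.Basis ι R N)
    {t : M ⊗[R] N} (h : ∀ s, TensorProduct.rid R M ((b.coord s).lTensor M t) = 0) : t = 0 := by
  classical
  refine (equivFinsuppOfBasisRight b).map_eq_zero_iff.mp (Finsupp.ext fun s => ?_)
  simpa [equivFinsuppOfBasisRight_apply] using h s

theorem rid_lTensor_rTensor (φ : N →ₗ[R] R) (u : M →ₗ[R] M') (t : M ⊗[R] N) :
    TensorProduct.rid R M' (φ.lTensor M' (u.rTensor N t)) =
      u (TensorProduct.rid R M (φ.lTensor M t)) := by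
  induction t using TensorProduct.induction_on with
  | zero => simp
  | tmul m x => simp
  | add t t' ht ht' => simp only [map_add, ht, ht']

theorem eq_zero_of_forall_lTensor_proj {K : Type*} [Field K] [Module K M] [Module K N]
    {gr : ℕ → Submodule K N} (h : DirectSum.IsInternal gr) {t : M ⊗[K] N}
    (ht : ∀ q, (h.proj q).lTensor M t = 0) : t = 0 := by
  let b := h.collectedBasis fun q => Module.Free.chooseBasis K (gr q)
  refine eq_zero_of_forall_rid_lTensor_coord b fun s => ?_
  have hcoord : b.coord s ∘ₗ h.proj s.1 = b.coord s := LinearMap.ext (h.coord_proj _ s)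
  rw [← hcoord, LinearMap.lTensor_comp_apply, ht, map_zero, map_zero]

end TensorProduct

section PropertyP

variable {g n : ℕ} {Z W : Type*} [AddCommGroup Z] [Module ℂ Z] [AddCommGroup W] [Module ℂ W]
  {act : Fin g → Fin n → Module.End ℂ Z} {i j : Fin n}

structure IsPKernel (act : Fin g → Fin n → Module.End ℂ Z) (i j : Fin n)
    (β : Fin g → Fin g → Z) : Prop where
  apply_eq_zero : ∀ (a b c : Fin g) (k : {k : Fin n // k ≠ i ∧ k ≠ j}), act c k.1 (β a b) = 0
  sum_left_eq_zero : ∀ a, ∑ c, act c i (β c a) = 0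
  sum_right_eq_zero : ∀ a, ∑ c, act c j (β a c) = 0

theorem propertyP_iff : PropertyP act i j ↔ ∀ β, IsPKernel act i j β → β = 0 := by
  let Φ : (Fin g → Fin g → Z) →+ _ :=
    { toFun := fun β =>
        ((fun (a b c : Fin g) (k : {k : Fin n // k ≠ i ∧ k ≠ j}) => act c k.1 (β a b)),
         (fun a : Fin g => ∑ c : Fin g, act c i (β c a)),
         (fun a : Fin g => ∑ c : Fin g, act c j (β a c)))
      map_zero' := by simp [Pi.zero_def]
      map_add' := fun β β' => by simp [Finset.sum_add_distrib, Pi.add_def] }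
  refine (injective_iff_map_eq_zero Φ).trans (forall_congr' fun β => imp_congr_left ?_)
  simp only [Φ, AddMonoidHom.coe_mk, ZeroHom.coe_mk, Prod.mk_eq_zero, funext_iff]
  exact ⟨fun ⟨h₁, h₂, h₃⟩ => ⟨h₁, h₂, h₃⟩, fun ⟨h₁, h₂, h₃⟩ => ⟨h₁, h₂, h₃⟩⟩

theorem IsPKernel.map {act' : Fin g → Fin n → Module.End ℂ W} {β : Fin g → Fin g → Z}
    (hβ : IsPKernel act i j β) (f : Z →ₗ[ℂ] W)
    (hf : ∀ c k a b, f (act c k (β a b)) = act' c k (f (β a b))) :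
    IsPKernel act' i j fun a b => f (β a b) where
  apply_eq_zero a b c k := by rw [← hf, hβ.apply_eq_zero, map_zero]
  sum_left_eq_zero a := by simp_rw [← hf, ← map_sum, hβ.sum_left_eq_zero, map_zero]
  sum_right_eq_zero a := by simp_rw [← hf, ← map_sum, hβ.sum_right_eq_zero, map_zero]

theorem PropertyP.of_linearEquiv {act' : Fin g → Fin n → Module.End ℂ W}
    (hP : PropertyP act' i j) (e : Z ≃ₗ[ℂ] W) (he : ∀ c k z, e (act c k z) = act' c k (e z)) :
    PropertyP act i j :=
  propertyP_iff.mpr fun _ hβ => funext₂ fun a b => e.map_eq_zero_iff.mp <|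
    congrFun₂ (propertyP_iff.mp hP _ (hβ.map e.toLinearMap fun _ _ _ _ => he ..)) a b

theorem PropertyP.rTensor (hP : PropertyP act i j) (N : Type*) [AddCommGroup N] [Module ℂ N] :
    PropertyP (fun a k => (act a k).rTensor N) i j := by
  refine propertyP_iff.mpr fun γ hγ => funext₂ fun a b => ?_
  let bN := Module.Free.chooseBasis ℂ N
  refine TensorProduct.eq_zero_of_forall_rid_lTensor_coord bN fun s => ?_
  have := propertyP_iff.mp hP _ (hγ.map (TensorProduct.rid ℂ Z ∘ₗ (bN.coord s).lTensor Z)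
    fun _ _ _ _ => TensorProduct.rid_lTensor_rTensor ..)
  exact congrFun₂ this a b

theorem PropertyP.tensor_of_isInternal {N : Type*} [AddCommGroup N] [Module ℂ N]
    (hP : PropertyP act i j) (actN : Fin g → Fin n → Module.End ℂ N)
    {grN : ℕ → Submodule ℂ N} (hNint : DirectSum.IsInternal grN)
    (hNgr : ∀ (a : Fin g) (k : Fin n) (d : ℕ), ∀ m ∈ grN d, actN a k m ∈ grN (d + 1)) :
    PropertyP (fun a k => (act a k).rTensor N + (actN a k).lTensor Z) i j := by
  classical
  refine propertyP_iff.mpr fun β hβ => ?_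
  by_contra hne
  have hex : ∃ q, ∃ a b, (hNint.proj q).lTensor Z (β a b) ≠ 0 := by
    contrapose! hne
    exact funext₂ fun a b => TensorProduct.eq_zero_of_forall_lTensor_proj hNint (hne · a b)
  obtain ⟨a₀, b₀, hne₀⟩ := Nat.find_spec hex
  have hlow : ∀ c k a b, (hNint.proj (Nat.find hex) ∘ₗ actN c k).lTensor Z (β a b) = 0 := by
    intro c k a b
    rcases h : Nat.find hex with _ | q
    · rw [hNint.proj_zero_comp (hNgr c k), LinearMap.lTensor_zero, LinearMap.zero_apply]
    · have hq : ∀ a b, (hNint.proj q).lTensor Z (β a b) = 0 := by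
        simpa using Nat.find_min hex (h ▸ q.lt_succ_self)
      rw [hNint.proj_succ_comp (hNgr c k), LinearMap.lTensor_comp_apply, hq, map_zero]
  have hγ := hβ.map ((hNint.proj (Nat.find hex)).lTensor Z)
    (act' := fun a k => (act a k).rTensor N) fun c k a b => by
      rw [LinearMap.add_apply, map_add, ← LinearMap.lTensor_comp_apply, hlow, add_zero,
        ← LinearMap.comp_apply, LinearMap.lTensor_comp_rTensor, ← LinearMap.rTensor_comp_lTensor,
        LinearMap.comp_apply]
  exact hne₀ (congrFun₂ (propertyP_iff.mp (hP.rTensor N) _ hγ) a₀ b₀)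

end PropertyP

theorem propertyP_tensor_general {g n : ℕ} (i j : Fin n)
    {M N : Type*} [AddCommGroup M] [Module ℂ M] [AddCommGroup N] [Module ℂ N]
    (actM : Fin g → Fin n → Module.End ℂ M) (actN : Fin g → Fin n → Module.End ℂ N)
    (grM : ℕ → Submodule ℂ M) (grN : ℕ → Submodule ℂ N)
    (hMint : DirectSum.IsInternal grM) (hNint : DirectSum.IsInternal grN)
    (hMgr : ∀ (a : Fin g) (k : Fin n) (d : ℕ), ∀ m ∈ grM d, actM a k m ∈ grM (d + 1))
    (hNgr : ∀ (a : Fin g) (k : Fin n) (d : ℕ), ∀ m ∈ grN d, actN a k m ∈ grN (d + 1))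
    (hP : PropertyP actM i j ∨ PropertyP actN i j) :
    PropertyP
      (fun a k => LinearMap.rTensor N (actM a k) + LinearMap.lTensor M (actN a k))
      i j := by
  rcases hP with hPM | hPN
  · exact hPM.tensor_of_isInternal actN hNint hNgr
  · refine (hPN.tensor_of_isInternal actM hMint hMgr).of_linearEquiv (TensorProduct.comm ℂ M N)
      fun a k t => ?_
    simp [LinearMap.lTensor_comm, LinearMap.rTensor_comm, add_comm]

/-- If `M` and `N` are ℕ-graded `F^{⊗n}`-modules (i.e. `ℂ`-modules with
commuting-between-different-indices operators `x_a^k`, each raising the degree of an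
internal ℕ-grading by one) and `M` or `N` satisfies property (P), then the tensor product
`M ⊗ N` (with `x_a^k` acting by `x_a^k ⊗ 1 + 1 ⊗ x_a^k`) satisfies property (P). -/
theorem propertyP_tensor {g n : ℕ} (i j : Fin n) (hij : i ≠ j)
    {M N : Type*} [AddCommGroup M] [Module ℂ M] [AddCommGroup N] [Module ℂ N]
    (actM : Fin g → Fin n → Module.End ℂ M) (actN : Fin g → Fin n → Module.End ℂ N)
    (hMcomm : ∀ (a b : Fin g) (k l : Fin n), k ≠ l → Commute (actM a k) (actM b l))
    (hNcomm : ∀ (a b : Fin g) (k l : Fin n), k ≠ l → Commute (actN a k) (actN b l))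
    (grM : ℕ → Submodule ℂ M) (grN : ℕ → Submodule ℂ N)
    (hMint : DirectSum.IsInternal grM) (hNint : DirectSum.IsInternal grN)
    (hMgr : ∀ (a : Fin g) (k : Fin n) (d : ℕ), ∀ m ∈ grM d, actM a k m ∈ grM (d + 1))
    (hNgr : ∀ (a : Fin g) (k : Fin n) (d : ℕ), ∀ m ∈ grN d, actN a k m ∈ grN (d + 1))
    (hP : PropertyP actM i j ∨ PropertyP actN i j) :
    PropertyP
      (fun a k => LinearMap.rTensor N (actM a k) + LinearMap.lTensor M (actN a k))
      i j :=
  propertyP_tensor_general i j actM actN grM grN hMint hNint hMgr hNgr hP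
end
end
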